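/- PEHE decomposition bound: for any measurable hypothesis h, ε_PEHE(h) ≤ 2·L_IF(h) + 2·L_ICF(h), where ε_PEHE(h) = ∫ (h(x,1) − h(x,0) − f(x,1) + f(x,0))² p_IF(x) dx. -/
import Mathlib


open MeasureTheory

/-- Noise-free factual loss with respect to a joint density `p` over `(X, T)`:
`L_p(h) = ∑_t ∫ (f(x,t) - h(x,t))² p(x,t) dx`. -/
noncomputable def lossXT {X : Type*} [MeasurableSpace X] (μ : Measure X)
    (p : X → Bool → ℝ) (f h : X → Bool → ℝ) : ℝ :=
  ∑ t : Bool, ∫ x, (f x t - h x t) ^ 2 * p x t ∂μ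

theorem stmt_7 {X : Type*} [MeasurableSpace X] (μ : Measure X)
    (pIF : X → Bool → ℝ) (f : X → Bool → ℝ)
    (hp0 : ∀ x t, 0 ≤ pIF x t)
    (hT1 : ∫ x, pIF x true ∂μ = 1 / 2) (hT0 : ∫ x, pIF x false ∂μ = 1 / 2)
    (hint : ∀ h : X → Bool → ℝ, ∀ t t' : Bool,
      Integrable (fun x => (f x t - h x t) ^ 2 * pIF x t') μ) :
    ∀ h : X → Bool → ℝ, Measurable (fun q : X × Bool => h q.1 q.2) →
      (∫ x, (h x true - h x false - f x true + f x false) ^ 2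
          * (pIF x true + pIF x false) ∂μ)
        ≤ 2 * lossXT μ pIF f h + 2 * lossXT μ (fun x t => pIF x (!t)) f h := by
  intro h _
  have ha1 := hint h true true
  have ha0 := hint h true false
  have hb1 := hint h false true
  have hb0 := hint h false false
  set g : X → Bool → ℝ := fun x t => h x t + h x (!t) - f x (!t) with hg
  have hc1 := hint g true true
  have hc0 := hint g true false
  have hF : Integrable (fun x =>
      2 * ((f x true - h x true) ^ 2 * pIF x true)
      + 2 * ((f x true - h x true) ^ 2 * pIF x false)
      + 2 * ((f x false - h x false) ^ 2 * pIF x true)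
      + 2 * ((f x false - h x false) ^ 2 * pIF x false)) μ :=
    (((ha1.const_mul 2).add (ha0.const_mul 2)).add (hb1.const_mul 2)).add
      (hb0.const_mul 2)
  have hG : Integrable (fun x =>
      (f x true - g x true) ^ 2 * pIF x true
      + (f x true - g x true) ^ 2 * pIF x false) μ := hc1.add hc0
  have hkey : ∀ x, (h x true - h x false - f x true + f x false) ^ 2
      * (pIF x true + pIF x false)
      = (2 * ((f x true - h x true) ^ 2 * pIF x true)
      + 2 * ((f x true - h x true) ^ 2 * pIF x false)
      + 2 * ((f x false - h x false) ^ 2 * pIF x true)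
      + 2 * ((f x false - h x false) ^ 2 * pIF x false))
      - ((f x true - g x true) ^ 2 * pIF x true
      + (f x true - g x true) ^ 2 * pIF x false) := by
    intro x; simp only [hg, Bool.not_true]; ring
  have hLHS : (∫ x, (h x true - h x false - f x true + f x false) ^ 2
      * (pIF x true + pIF x false) ∂μ)
      = (∫ x, (2 * ((f x true - h x true) ^ 2 * pIF x true)
      + 2 * ((f x true - h x true) ^ 2 * pIF x false)
      + 2 * ((f x false - h x false) ^ 2 * pIF x true)
      + 2 * ((f x false - h x false) ^ 2 * pIF x false)) ∂μ)
      - ∫ x, ((f x true - g x true) ^ 2 * pIF x true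
      + (f x true - g x true) ^ 2 * pIF x false) ∂μ := by
    rw [← integral_sub hF hG]
    exact integral_congr_ae (Filter.Eventually.of_forall hkey)
  have hGnn : 0 ≤ ∫ x, ((f x true - g x true) ^ 2 * pIF x true
      + (f x true - g x true) ^ 2 * pIF x false) ∂μ := by
    apply integral_nonneg
    intro x
    have := hp0 x true
    have := hp0 x false
    positivity
  have hRHS : (∫ x, (2 * ((f x true - h x true) ^ 2 * pIF x true)
      + 2 * ((f x true - h x true) ^ 2 * pIF x false)
      + 2 * ((f x false - h x false) ^ 2 * pIF x true)
      + 2 * ((f x false - h x false) ^ 2 * pIF x false)) ∂μ)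
      = 2 * lossXT μ pIF f h + 2 * lossXT μ (fun x t => pIF x (!t)) f h := by
    have i1 : Integrable (fun x => 2 * ((f x true - h x true) ^ 2 * pIF x true)) μ :=
      ha1.const_mul 2
    have i2 : Integrable (fun x => 2 * ((f x true - h x true) ^ 2 * pIF x false)) μ :=
      ha0.const_mul 2
    have i3 : Integrable (fun x => 2 * ((f x false - h x false) ^ 2 * pIF x true)) μ :=
      hb1.const_mul 2
    have i4 : Integrable (fun x => 2 * ((f x false - h x false) ^ 2 * pIF x false)) μ :=
      hb0.const_mul 2
    have i12 : Integrable (fun x => 2 * ((f x true - h x true) ^ 2 * pIF x true)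
        + 2 * ((f x true - h x true) ^ 2 * pIF x false)) μ := i1.add i2
    have i123 : Integrable (fun x => 2 * ((f x true - h x true) ^ 2 * pIF x true)
        + 2 * ((f x true - h x true) ^ 2 * pIF x false)
        + 2 * ((f x false - h x false) ^ 2 * pIF x true)) μ := i12.add i3
    rw [integral_add i123 i4, integral_add i12 i3, integral_add i1 i2,
      integral_const_mul, integral_const_mul, integral_const_mul,
      integral_const_mul]
    simp only [lossXT, Fintype.sum_bool, Bool.not_true, Bool.not_false]
    ring
  rw [hLHS, ← hRHS]
  linarith
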